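/- arXiv:2205.07698 — 6 statements merged into one kernel-verified Lean document; each statement's English description precedes it below -/
import Mathlib

section
/- For every τ ∈ (0,2) and every s ∈ ℝ, one has τ²/(4(1+|s|)^{1+τ}) ≤ ψ'(s) ≤ 1/(1+|s|), where ψ'(s) = 1/((1+ln(1+|s|))²(1+|s|)). -/
/-- The derivative ψ'(s) = 1/((1+ln(1+|s|))²(1+|s|)) of the diffeomorphism
ψ(s) = (ln(1+|s|)/(1+ln(1+|s|)))·sign(s). -/
noncomputable def psi' (s : ℝ) : ℝ :=
  1 / ((1 + Real.log (1 + |s|)) ^ 2 * (1 + |s|))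

theorem stmt_1 (τ : ℝ) (hτ : τ ∈ Set.Ioo (0 : ℝ) 2) (s : ℝ) :
    τ ^ 2 / (4 * (1 + |s|) ^ (1 + τ)) ≤ psi' s ∧ psi' s ≤ 1 / (1 + |s|) := by
  obtain ⟨hτ0, hτ2⟩ := hτ
  have hx1 : (1:ℝ) ≤ 1 + |s| := le_add_of_nonneg_right (abs_nonneg s)
  set x := 1 + |s| with hxdef
  have hx0 : (0:ℝ) < x := by linarith
  have hL0 : 0 ≤ Real.log x := Real.log_nonneg hx1
  have hy1 : 1 ≤ x ^ (τ/2) := Real.one_le_rpow hx1 (by linarith)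
  have hlog : τ/2 * Real.log x ≤ x ^ (τ/2) - 1 := by
    have h := Real.log_le_sub_one_of_pos (show 0 < x ^ (τ/2) by positivity)
    rwa [Real.log_rpow hx0] at h
  have hkey : 1 + Real.log x ≤ (2/τ) * x ^ (τ/2) := by
    have h1 : Real.log x ≤ (2/τ) * (x ^ (τ/2) - 1) := by
      calc Real.log x = (2/τ) * (τ/2 * Real.log x) := by field_simp
      _ ≤ (2/τ) * (x^(τ/2) - 1) := by
          apply mul_le_mul_of_nonneg_left hlog; positivity
    have h2τ : 1 ≤ 2/τ := by rw [le_div_iff₀ hτ0]; linarith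
    nlinarith
  have hyτ : x ^ (τ/2) * x ^ (τ/2) = x ^ τ := by
    rw [← Real.rpow_add hx0]; ring_nf
  have hxτ : x ^ (1 + τ) = x * x ^ τ := by
    rw [Real.rpow_add hx0, Real.rpow_one]
  have hden0 : 0 < (1 + Real.log x) ^ 2 * x := by positivity
  constructor
  · have hkey2 : τ * (1 + Real.log x) ≤ 2 * x ^ (τ/2) := by
      have := mul_le_mul_of_nonneg_left hkey hτ0.le
      calc τ * (1 + Real.log x) ≤ τ * (2/τ * x ^ (τ/2)) := this
      _ = 2 * x ^ (τ/2) := by field_simp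
    rw [psi', ← hxdef, div_le_div_iff₀ (by positivity) hden0]
    rw [hxτ, ← hyτ]
    nlinarith [mul_le_mul hkey2 hkey2 (by positivity) (by positivity), hx0,
      mul_le_mul_of_nonneg_left (mul_le_mul hkey2 hkey2 (by positivity) (by positivity)) hx0.le]
  · rw [psi', ← hxdef, div_le_div_iff₀ hden0 hx0]
    nlinarith [sq_nonneg (Real.log x)]
end

section
/- Let p > 2 be a real number. For every s ≥ 0, ψ_p(s) ≤ (p−1)·((1+s)^{1/(p−1)} − 1), where ψ_p(s) = ∫₀^s ψ'(t)^{(p−2)/(p−1)} dt. -/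
/-- ψ_p(s) = ∫₀^s ψ'(t)^((p−2)/(p−1)) dt. -/
noncomputable def psip (p s : ℝ) : ℝ :=
  ∫ t in (0:ℝ)..s, (psi' t) ^ ((p - 2) / (p - 1))

lemma psi'_cont : Continuous psi' := by
  have h1 : Continuous fun s : ℝ => 1 + |s| := by continuity
  have hpos : ∀ s : ℝ, (0:ℝ) < 1 + |s| := fun s => by positivity
  have hlog : Continuous fun s : ℝ => Real.log (1 + |s|) :=
    h1.log (fun s => (hpos s).ne')
  have hlogpos : ∀ s : ℝ, (0:ℝ) < 1 + Real.log (1 + |s|) := by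
    intro s
    have : 0 ≤ Real.log (1 + |s|) := Real.log_nonneg (by simp [abs_nonneg])
    linarith
  apply Continuous.div continuous_const (by fun_prop)
  intro s
  have := hpos s; have := hlogpos s
  positivity

lemma psi'_pos (s : ℝ) : 0 < psi' s := by
  have hpos : (0:ℝ) < 1 + |s| := by positivity
  have : 0 ≤ Real.log (1 + |s|) := Real.log_nonneg (by simp [abs_nonneg])
  unfold psi'
  positivity

theorem stmt_2 (p : ℝ) (hp : 2 < p) (s : ℝ) (hs : 0 ≤ s) :
    psip p s ≤ (p - 1) * ((1 + s) ^ (1 / (p - 1)) - 1) := by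
  have hp1 : (0:ℝ) < p - 1 := by linarith
  set q : ℝ := (p - 2) / (p - 1) with hq
  have hq0 : 0 ≤ q := by
    apply div_nonneg <;> linarith
  have hq1 : q < 1 := by
    rw [hq, div_lt_one hp1]; linarith
  -- integrability
  have hcont : Continuous fun t : ℝ => (psi' t) ^ q :=
    psi'_cont.rpow_const (fun x => Or.inr hq0)
  have hint1 : IntervalIntegrable (fun t : ℝ => (psi' t) ^ q)
      MeasureTheory.volume 0 s := hcont.intervalIntegrable 0 s
  have hcont2 : ContinuousOn (fun t : ℝ => (1 + t) ^ (-q)) (Set.uIcc 0 s) := by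
    apply ContinuousOn.rpow_const (by fun_prop)
    intro t ht
    left
    rw [Set.uIcc_of_le hs] at ht
    have := ht.1
    positivity
  have hint2 : IntervalIntegrable (fun t : ℝ => (1 + t) ^ (-q))
      MeasureTheory.volume 0 s := hcont2.intervalIntegrable
  have key : psip p s ≤ ∫ t in (0:ℝ)..s, (1 + t) ^ (-q) := by
    apply intervalIntegral.integral_mono_on hs hint1 hint2
    intro t ht
    have ht0 : 0 ≤ t := ht.1
    have habs : |t| = t := abs_of_nonneg ht0
    have hpos : (0:ℝ) < 1 + t := by linarith
    have hle : psi' t ≤ (1 + t)⁻¹ := by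
      have hl : 0 ≤ Real.log (1 + t) := Real.log_nonneg (by linarith)
      have h1 : 1 ≤ (1 + Real.log (1 + t)) ^ 2 := by nlinarith
      rw [psi', habs, div_le_iff₀ (by positivity), inv_mul_eq_div,
        le_div_iff₀ hpos]
      nlinarith
    calc (psi' t) ^ q ≤ ((1 + t)⁻¹) ^ q :=
          Real.rpow_le_rpow (psi'_pos t).le hle hq0
      _ = (1 + t) ^ (-q) := by
          rw [Real.inv_rpow hpos.le, ← Real.rpow_neg hpos.le]
      _ = (fun t => (1 + t) ^ (-q)) t := rfl
  have hval : (∫ t in (0:ℝ)..s, (1 + t) ^ (-q))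
      = (p - 1) * ((1 + s) ^ (1 / (p - 1)) - 1) := by
    have hcomp : (∫ t in (0:ℝ)..s, (1 + t) ^ (-q))
        = ∫ u in (1:ℝ)..(s + 1), u ^ (-q) := by
      have h := intervalIntegral.integral_comp_add_right (a := 0) (b := s)
        (fun u => u ^ (-q)) 1
      simp only [zero_add] at h
      rw [← h]
      simp [add_comm]
    rw [hcomp, integral_rpow (Or.inl (by linarith))]
    have hqe : -q + 1 = 1 / (p - 1) := by
      rw [hq]; field_simp; ring
    rw [hqe, Real.one_rpow, one_div, div_inv_eq_mul]
    rw [add_comm s 1]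
    ring
  exact key.trans hval.le
end

section
/- Let N ≥ 1 be an integer and p > 2 a real number. For all x, y ∈ ℝ^N, 0 ≤ |x+y|^p − |x|^p − p|x|^{p−2}(x·y) ≤ (p(p−1)/2)·|y|²·(|x|+|y|)^{p−2}, where |·| denotes the Euclidean norm, x·y the Euclidean inner product, and |x|^{p−2}x is interpreted as 0 when x = 0. -/
/-!
Put `a = ‖x‖`, `b = ‖y‖`, `c = ⟪x, y⟫` and `q t = ‖x + t • y‖² = a² + 2ct + b²t²`. The function
`f t = q t ^ (p / 2)` has second derivative `p q^(p/2-2) ((p-2)(c+b²t)² + q b²)`, which is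
nonnegative and, by Cauchy–Schwarz `(c + b²t)² ≤ q b²` and `q t ≤ (a + b)²` on `[0, 1]`, at most
`p(p-1) b² (a+b)^(p-2)`. Second-order Taylor bounds for `f` on `[0, 1]` give the claim.
This needs `q > 0`, i.e. strict Cauchy–Schwarz `c² < a²b²`; the general case follows by replacing
`a, b` with `a + ε, b + ε` and letting `ε → 0⁺`, which is possible since `p > 2` makes both sides
continuous.
-/

open Set Filter Topology

theorem add_deriv_le_of_second_deriv_nonneg {u u' u'' : ℝ → ℝ}
    (hu : ∀ t, HasDerivAt u (u' t) t) (hu' : ∀ t, HasDerivAt u' (u'' t) t)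
    (hu'' : ∀ t ∈ Icc (0 : ℝ) 1, 0 ≤ u'' t) :
    u 0 + u' 0 ≤ u 1 := by
  have hmono : MonotoneOn u' (Icc 0 1) :=
    monotoneOn_of_hasDerivWithinAt_nonneg (convex_Icc 0 1)
      (fun t _ ↦ (hu' t).continuousAt.continuousWithinAt)
      (fun t _ ↦ (hu' t).hasDerivWithinAt) (fun t ht ↦ hu'' t (interior_subset ht))
  obtain ⟨ξ, hξ, hslope⟩ := exists_hasDerivAt_eq_slope u u' zero_lt_one
    (fun t _ ↦ (hu t).continuousAt.continuousWithinAt) (fun t _ ↦ hu t)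
  have := hmono ⟨le_rfl, zero_le_one⟩ (Ioo_subset_Icc_self hξ) hξ.1.le
  rw [sub_zero, div_one] at hslope
  linarith

theorem taylor_remainder_bounds_of_second_deriv_mem_Icc {f f' f'' : ℝ → ℝ} {M : ℝ}
    (hf : ∀ t, HasDerivAt f (f' t) t) (hf' : ∀ t, HasDerivAt f' (f'' t) t)
    (hf''_nonneg : ∀ t ∈ Icc (0 : ℝ) 1, 0 ≤ f'' t) (hf''_le : ∀ t ∈ Icc (0 : ℝ) 1, f'' t ≤ M) :
    0 ≤ f 1 - f 0 - f' 0 ∧ f 1 - f 0 - f' 0 ≤ M / 2 := by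
  refine ⟨by linarith [add_deriv_le_of_second_deriv_nonneg hf hf' hf''_nonneg], ?_⟩
  have hg : ∀ t, HasDerivAt (fun t ↦ M * t ^ 2 / 2 - f t) (M * t - f' t) t := fun t ↦
    (((hasDerivAt_pow 2 t).const_mul M).div_const 2).sub (hf t) |>.congr_deriv (by ring)
  have hg' : ∀ t, HasDerivAt (fun t ↦ M * t - f' t) (M - f'' t) t := fun t ↦
    ((hasDerivAt_id t).const_mul M).sub (hf' t) |>.congr_deriv (by simp)
  have := add_deriv_le_of_second_deriv_nonneg hg hg'
    (fun t ht ↦ sub_nonneg.2 (hf''_le t ht))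
  linarith

theorem Real.sq_rpow_div_two {x : ℝ} (hx : 0 ≤ x) (r : ℝ) : (x ^ 2) ^ (r / 2) = x ^ r := by
  rw [Real.rpow_div_two_eq_sqrt r (sq_nonneg x), Real.sqrt_sq hx]

section QuadraticPower

variable {p a b c : ℝ}

theorem quadratic_pos_of_sq_lt (hc : c ^ 2 < a ^ 2 * b ^ 2) (t : ℝ) :
    0 < a ^ 2 + 2 * c * t + b ^ 2 * t ^ 2 := by
  nlinarith [sq_nonneg (c + b ^ 2 * t), sq_nonneg (b * t)]

theorem quadratic_le_sq_add (ha : 0 ≤ a) (hb : 0 ≤ b) (hc : c ^ 2 ≤ a ^ 2 * b ^ 2) {t : ℝ}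
    (ht : t ∈ Icc (0 : ℝ) 1) : a ^ 2 + 2 * c * t + b ^ 2 * t ^ 2 ≤ (a + b) ^ 2 := by
  have hcab : c ≤ a * b := by nlinarith [mul_nonneg ha hb]
  nlinarith [mul_nonneg ha hb, mul_nonneg (sub_nonneg.2 hcab) ht.1, ht.2,
    mul_nonneg ht.1 (sub_nonneg.2 ht.2)]

theorem hasDerivAt_quadratic (a b c t : ℝ) :
    HasDerivAt (fun t ↦ a ^ 2 + 2 * c * t + b ^ 2 * t ^ 2) (2 * (c + b ^ 2 * t)) t :=
  ((hasDerivAt_id t).const_mul (2 * c)).const_add (a ^ 2) |>.add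
    ((hasDerivAt_pow 2 t).const_mul (b ^ 2)) |>.congr_deriv (by simp; ring)

theorem hasDerivAt_quadratic_rpow {t : ℝ} (hq : a ^ 2 + 2 * c * t + b ^ 2 * t ^ 2 ≠ 0) (r : ℝ) :
    HasDerivAt (fun t ↦ (a ^ 2 + 2 * c * t + b ^ 2 * t ^ 2) ^ r)
      (2 * r * (a ^ 2 + 2 * c * t + b ^ 2 * t ^ 2) ^ (r - 1) * (c + b ^ 2 * t)) t :=
  (hasDerivAt_quadratic a b c t).rpow_const (Or.inl hq) |>.congr_deriv (by ring)

theorem quadratic_rpow_taylor_bounds_of_sq_lt (hp : 2 < p) (ha : 0 ≤ a) (hb : 0 ≤ b)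
    (hc : c ^ 2 < a ^ 2 * b ^ 2) :
    0 ≤ (a ^ 2 + 2 * c + b ^ 2) ^ (p / 2) - a ^ p - p * a ^ (p - 2) * c ∧
    (a ^ 2 + 2 * c + b ^ 2) ^ (p / 2) - a ^ p - p * a ^ (p - 2) * c ≤
      p * (p - 1) / 2 * b ^ 2 * (a + b) ^ (p - 2) := by
  set q : ℝ → ℝ := fun t ↦ a ^ 2 + 2 * c * t + b ^ 2 * t ^ 2 with hq
  have hq_pos : ∀ t, 0 < q t := quadratic_pos_of_sq_lt hc
  have hpow : ∀ t, q t ^ ((p - 2) / 2) = q t ^ ((p - 4) / 2) * q t := fun t ↦ by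
    rw [← Real.rpow_add_one (hq_pos t).ne']; ring_nf
  have hf : ∀ t,
      HasDerivAt (fun t ↦ q t ^ (p / 2)) (p * q t ^ ((p - 2) / 2) * (c + b ^ 2 * t)) t :=
    fun t ↦ (hasDerivAt_quadratic_rpow (hq_pos t).ne' (p / 2)).congr_deriv
      (by rw [show p / 2 - 1 = (p - 2) / 2 by ring]; ring)
  have hf' : ∀ t, HasDerivAt (fun t ↦ p * q t ^ ((p - 2) / 2) * (c + b ^ 2 * t))
      (p * q t ^ ((p - 4) / 2) * ((p - 2) * (c + b ^ 2 * t) ^ 2 + q t * b ^ 2)) t := fun t ↦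
    ((hasDerivAt_quadratic_rpow (hq_pos t).ne' ((p - 2) / 2)).const_mul p).mul
      (((hasDerivAt_id t).const_mul (b ^ 2)).const_add c) |>.congr_deriv (by
        rw [show (p - 2) / 2 - 1 = (p - 4) / 2 by ring, hpow]
        simp only [id]
        ring)
  have hp2 : 0 ≤ p - 2 := by linarith
  have hf''_nonneg : ∀ t ∈ Icc (0 : ℝ) 1,
      0 ≤ p * q t ^ ((p - 4) / 2) * ((p - 2) * (c + b ^ 2 * t) ^ 2 + q t * b ^ 2) := fun t _ ↦ by
    have := hq_pos t
    positivity
  have hf''_le : ∀ t ∈ Icc (0 : ℝ) 1,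
      p * q t ^ ((p - 4) / 2) * ((p - 2) * (c + b ^ 2 * t) ^ 2 + q t * b ^ 2) ≤
        p * (p - 1) * b ^ 2 * (a + b) ^ (p - 2) := fun t ht ↦ by
    have hcq : (c + b ^ 2 * t) ^ 2 ≤ q t * b ^ 2 := by
      simp only [hq]; nlinarith
    calc p * q t ^ ((p - 4) / 2) * ((p - 2) * (c + b ^ 2 * t) ^ 2 + q t * b ^ 2)
        ≤ p * q t ^ ((p - 4) / 2) * ((p - 2) * (q t * b ^ 2) + q t * b ^ 2) := by
          have := hq_pos t
          gcongr
      _ = p * (p - 1) * b ^ 2 * q t ^ ((p - 2) / 2) := by rw [hpow]; ring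
      _ ≤ p * (p - 1) * b ^ 2 * ((a + b) ^ 2) ^ ((p - 2) / 2) := by
          have := hq_pos t
          gcongr
          · have : 0 ≤ p * (p - 1) := by nlinarith
            positivity
          · exact quadratic_le_sq_add ha hb hc.le ht
      _ = p * (p - 1) * b ^ 2 * (a + b) ^ (p - 2) := by rw [Real.sq_rpow_div_two (by positivity)]
  obtain ⟨hlow, hup⟩ := taylor_remainder_bounds_of_second_deriv_mem_Icc hf hf' hf''_nonneg hf''_le
  simp only [hq, mul_zero, mul_one, one_pow, zero_pow two_ne_zero, add_zero,
    Real.sq_rpow_div_two ha] at hlow hup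
  exact ⟨hlow, by linarith⟩

theorem quadratic_rpow_taylor_bounds (hp : 2 < p) (ha : 0 ≤ a) (hb : 0 ≤ b)
    (hc : c ^ 2 ≤ a ^ 2 * b ^ 2) :
    0 ≤ (a ^ 2 + 2 * c + b ^ 2) ^ (p / 2) - a ^ p - p * a ^ (p - 2) * c ∧
    (a ^ 2 + 2 * c + b ^ 2) ^ (p / 2) - a ^ p - p * a ^ (p - 2) * c ≤
      p * (p - 1) / 2 * b ^ 2 * (a + b) ^ (p - 2) := by
  set F : ℝ → ℝ := fun ε ↦ ((a + ε) ^ 2 + 2 * c + (b + ε) ^ 2) ^ (p / 2) - (a + ε) ^ p -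
    p * (a + ε) ^ (p - 2) * c
  set R : ℝ → ℝ := fun ε ↦ p * (p - 1) / 2 * (b + ε) ^ 2 * (a + ε + (b + ε)) ^ (p - 2)
  have hF : Tendsto F (𝓝[>] 0) (𝓝 (F 0)) :=
    ((by fun_prop (disch := linarith) : Continuous F).tendsto 0).mono_left nhdsWithin_le_nhds
  have hR : Tendsto R (𝓝[>] 0) (𝓝 (R 0)) :=
    ((by fun_prop (disch := linarith) : Continuous R).tendsto 0).mono_left nhdsWithin_le_nhds
  have hbounds : ∀ ε ∈ Ioi (0 : ℝ), 0 ≤ F ε ∧ F ε ≤ R ε := fun ε (hε : 0 < ε) ↦ by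
    have hab : a * b < (a + ε) * (b + ε) := by nlinarith
    refine quadratic_rpow_taylor_bounds_of_sq_lt hp (by linarith) (by linarith) ?_
    rw [← mul_pow] at hc ⊢
    exact hc.trans_lt (pow_lt_pow_left₀ hab (by positivity) two_ne_zero)
  have hlow := ge_of_tendsto hF (eventually_nhdsWithin_of_forall fun ε hε ↦ (hbounds ε hε).1)
  have hup := le_of_tendsto_of_tendsto hF hR
    (eventually_nhdsWithin_of_forall fun ε hε ↦ (hbounds ε hε).2)
  simp only [F, R, add_zero] at hlow hup
  exact ⟨hlow, hup⟩

end QuadraticPower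

open RealInnerProductSpace

theorem stmt_6_general (N : ℕ) (p : ℝ) (hp : 2 < p)
    (x y : EuclideanSpace ℝ (Fin N)) :
    0 ≤ ‖x + y‖ ^ p - ‖x‖ ^ p - p * ‖x‖ ^ (p - 2) * ⟪x, y⟫ ∧
    ‖x + y‖ ^ p - ‖x‖ ^ p - p * ‖x‖ ^ (p - 2) * ⟪x, y⟫ ≤
      p * (p - 1) / 2 * ‖y‖ ^ 2 * (‖x‖ + ‖y‖) ^ (p - 2) := by
  have hcs : ⟪x, y⟫ ^ 2 ≤ ‖x‖ ^ 2 * ‖y‖ ^ 2 := by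
    rw [← mul_pow, ← sq_abs]
    exact pow_le_pow_left₀ (abs_nonneg _) (abs_real_inner_le_norm x y) 2
  rw [← Real.sq_rpow_div_two (norm_nonneg (x + y)), norm_add_sq_real]
  exact quadratic_rpow_taylor_bounds hp (norm_nonneg x) (norm_nonneg y) hcs

theorem stmt_6 (N : ℕ) (hN : 1 ≤ N) (p : ℝ) (hp : 2 < p)
    (x y : EuclideanSpace ℝ (Fin N)) :
    0 ≤ ‖x + y‖ ^ p - ‖x‖ ^ p - p * ‖x‖ ^ (p - 2) * ⟪x, y⟫ ∧
    ‖x + y‖ ^ p - ‖x‖ ^ p - p * ‖x‖ ^ (p - 2) * ⟪x, y⟫ ≤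
      p * (p - 1) / 2 * ‖y‖ ^ 2 * (‖x‖ + ‖y‖) ^ (p - 2) :=
  stmt_6_general N p hp x y
end

section
/- Let N ≥ 1 be an integer and p > 2 a real number. For all t ∈ [−1,1] and all x, y ∈ ℝ^N, 0 ≤ |x+ty|^p − |x|^p − t·p·|x|^{p−2}(x·y) ≤ t²·p(p−1)·2^{p−3}·max(|x|^p, |y|^p), where |·| denotes the Euclidean norm, x·y the Euclidean inner product, and |x|^{p−2}x is interpreted as 0 when x = 0. -/
open RealInnerProductSpace

section Aux

lemma aux_L' {q u : ℝ} (hq : 0 < q) (h0 : 0 ≤ u) (h1 : u ≤ 1) :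
    (1 - u ^ q) * u ≤ q * (1 - u) := by
  have hu1 : u ^ q ≤ 1 := Real.rpow_le_one h0 h1 hq.le
  have huq : 0 ≤ u ^ q := Real.rpow_nonneg h0 q
  rcases le_or_gt 1 q with hq1 | hq1
  · have hb := one_add_mul_self_le_rpow_one_add (show (-1:ℝ) ≤ u - 1 by linarith) hq1
    rw [show (1:ℝ) + (u - 1) = u by ring] at hb
    nlinarith
  · rcases eq_or_lt_of_le h0 with h | h
    · rw [← h]; simp; positivity
    · have hinv : (0:ℝ) ≤ u⁻¹ := by positivity
      have hb := rpow_one_add_le_one_add_mul_self (show (-1:ℝ) ≤ u⁻¹ - 1 by linarith)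
        hq.le hq1.le
      rw [show (1:ℝ) + (u⁻¹ - 1) = u⁻¹ by ring, Real.inv_rpow h0] at hb
      have hq0 : 0 < u ^ q := Real.rpow_pos_of_pos h q
      have hb2 := mul_le_mul_of_nonneg_right hb hq0.le
      rw [inv_mul_cancel₀ hq0.ne'] at hb2
      have hb3 := mul_le_mul_of_nonneg_right hb2 h.le
      have hexp : (1 + q * (u⁻¹ - 1)) * u ^ q * u = u ^ q * u + q * (1 - u) * u ^ q := by
        field_simp <;> ring
      rw [one_mul, hexp] at hb3
      nlinarith [mul_le_mul_of_nonneg_left hu1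
        (mul_nonneg hq.le (by linarith : (0:ℝ) ≤ 1 - u))]

lemma aux_L {q r s : ℝ} (hq : 0 < q) (hs : 0 ≤ s) (hsr : s ≤ r) :
    (r ^ q - s ^ q) * s ≤ q * r ^ q * (r - s) := by
  rcases eq_or_lt_of_le (hs.trans hsr) with hr | hr
  · have hs0 : s = 0 := le_antisymm (hsr.trans hr.symm.le) hs
    rw [← hr, hs0]; simp
  · have h := aux_L' hq (div_nonneg hs hr.le) ((div_le_one hr).mpr hsr)
    rw [Real.div_rpow hs hr.le] at h
    have hrq : 0 < r ^ q := Real.rpow_pos_of_pos hr q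
    have h2 := mul_le_mul_of_nonneg_right h (by positivity : (0:ℝ) ≤ r ^ q * r)
    have e1 : (1 - s ^ q / r ^ q) * (s / r) * (r ^ q * r) = (r ^ q - s ^ q) * s := by
      field_simp <;> ring
    have e2 : q * (1 - s / r) * (r ^ q * r) = q * r ^ q * (r - s) := by
      field_simp <;> ring
    rw [e1, e2] at h2
    exact h2

variable {E : Type*} [NormedAddCommGroup E] [InnerProductSpace ℝ E]

lemma aux_lip' {q : ℝ} (hq : 0 < q) (a b v : E) (hba : ‖b‖ ≤ ‖a‖) :
    |‖a‖ ^ q * ⟪a, v⟫ - ‖b‖ ^ q * ⟪b, v⟫| ≤ (q + 1) * ‖a‖ ^ q * (‖a - b‖ * ‖v‖) := by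
  have key : ‖a‖ ^ q * ⟪a, v⟫ - ‖b‖ ^ q * ⟪b, v⟫
      = ‖a‖ ^ q * ⟪a - b, v⟫ + (‖a‖ ^ q - ‖b‖ ^ q) * ⟪b, v⟫ := by
    rw [inner_sub_left]; ring
  have haq : (0:ℝ) ≤ ‖a‖ ^ q := Real.rpow_nonneg (norm_nonneg a) q
  have hdiff : (0:ℝ) ≤ ‖a‖ ^ q - ‖b‖ ^ q :=
    sub_nonneg.mpr (Real.rpow_le_rpow (norm_nonneg b) hba hq.le)
  have h1 : |⟪a - b, v⟫| ≤ ‖a - b‖ * ‖v‖ := abs_real_inner_le_norm _ _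
  have h2 : |⟪b, v⟫| ≤ ‖b‖ * ‖v‖ := abs_real_inner_le_norm _ _
  have hL : (‖a‖ ^ q - ‖b‖ ^ q) * ‖b‖ ≤ q * ‖a‖ ^ q * (‖a‖ - ‖b‖) :=
    aux_L hq (norm_nonneg b) hba
  have hns : ‖a‖ - ‖b‖ ≤ ‖a - b‖ := norm_sub_norm_le a b
  calc |‖a‖ ^ q * ⟪a, v⟫ - ‖b‖ ^ q * ⟪b, v⟫|
      = |‖a‖ ^ q * ⟪a - b, v⟫ + (‖a‖ ^ q - ‖b‖ ^ q) * ⟪b, v⟫| := by rw [key]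
    _ ≤ |‖a‖ ^ q * ⟪a - b, v⟫| + |(‖a‖ ^ q - ‖b‖ ^ q) * ⟪b, v⟫| := abs_add_le _ _
    _ = ‖a‖ ^ q * |⟪a - b, v⟫| + (‖a‖ ^ q - ‖b‖ ^ q) * |⟪b, v⟫| := by
        rw [abs_mul, abs_mul, abs_of_nonneg haq, abs_of_nonneg hdiff]
    _ ≤ ‖a‖ ^ q * (‖a - b‖ * ‖v‖) + (‖a‖ ^ q - ‖b‖ ^ q) * (‖b‖ * ‖v‖) := by
        gcongr
    _ ≤ ‖a‖ ^ q * (‖a - b‖ * ‖v‖) + q * ‖a‖ ^ q * (‖a - b‖ * ‖v‖) := by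
        have h3 : (‖a‖ ^ q - ‖b‖ ^ q) * ‖b‖ * ‖v‖ ≤ q * ‖a‖ ^ q * ‖a - b‖ * ‖v‖ := by
          have : (‖a‖ ^ q - ‖b‖ ^ q) * ‖b‖ ≤ q * ‖a‖ ^ q * ‖a - b‖ := by
            nlinarith [mul_le_mul_of_nonneg_left hns (mul_nonneg hq.le haq)]
          exact mul_le_mul_of_nonneg_right this (norm_nonneg v)
        nlinarith [norm_nonneg v, norm_nonneg b]
    _ = (q + 1) * ‖a‖ ^ q * (‖a - b‖ * ‖v‖) := by ring

lemma aux_lip {q : ℝ} (hq : 0 < q) (a b v : E) :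
    |‖a‖ ^ q * ⟪a, v⟫ - ‖b‖ ^ q * ⟪b, v⟫|
      ≤ (q + 1) * (max ‖a‖ ‖b‖) ^ q * (‖a - b‖ * ‖v‖) := by
  rcases le_total ‖b‖ ‖a‖ with h | h
  · rw [max_eq_left h]; exact aux_lip' hq a b v h
  · rw [max_eq_right h, abs_sub_comm, norm_sub_rev]
    exact aux_lip' hq b a v h

lemma aux_mono {q : ℝ} (hq : 0 ≤ q) (a b : E) :
    0 ≤ ‖a‖ ^ q * ⟪a, a - b⟫ - ‖b‖ ^ q * ⟪b, a - b⟫ := by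
  have hab : ⟪a, b⟫ ≤ ‖a‖ * ‖b‖ := real_inner_le_norm a b
  have e1 : ⟪a, a - b⟫ = ‖a‖ * ‖a‖ - ⟪a, b⟫ := by
    rw [inner_sub_right, real_inner_self_eq_norm_mul_norm]
  have e2 : ⟪b, a - b⟫ = ⟪a, b⟫ - ‖b‖ * ‖b‖ := by
    rw [inner_sub_right, real_inner_self_eq_norm_mul_norm, real_inner_comm]
  have haq : (0:ℝ) ≤ ‖a‖ ^ q := Real.rpow_nonneg (norm_nonneg a) q
  have hbq : (0:ℝ) ≤ ‖b‖ ^ q := Real.rpow_nonneg (norm_nonneg b) q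
  have h3 : 0 ≤ (‖a‖ ^ q * ‖a‖ - ‖b‖ ^ q * ‖b‖) * (‖a‖ - ‖b‖) := by
    rcases le_total ‖a‖ ‖b‖ with h | h
    · have k2 : ‖a‖ ^ q * ‖a‖ ≤ ‖b‖ ^ q * ‖b‖ :=
        mul_le_mul (Real.rpow_le_rpow (norm_nonneg a) h hq) h (norm_nonneg a) hbq
      nlinarith [mul_nonneg (sub_nonneg.mpr k2) (sub_nonneg.mpr h)]
    · have k2 : ‖b‖ ^ q * ‖b‖ ≤ ‖a‖ ^ q * ‖a‖ :=
        mul_le_mul (Real.rpow_le_rpow (norm_nonneg b) h hq) h (norm_nonneg b) haq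
      nlinarith [mul_nonneg (sub_nonneg.mpr k2) (sub_nonneg.mpr h)]
  rw [e1, e2]
  nlinarith [mul_nonneg haq (sub_nonneg.mpr hab), mul_nonneg hbq (sub_nonneg.mpr hab)]

end Aux

theorem stmt_7 (N : ℕ) (hN : 1 ≤ N) (p : ℝ) (hp : 2 < p)
    (t : ℝ) (ht : t ∈ Set.Icc (-1 : ℝ) 1) (x y : EuclideanSpace ℝ (Fin N)) :
    0 ≤ ‖x + t • y‖ ^ p - ‖x‖ ^ p - t * p * ‖x‖ ^ (p - 2) * ⟪x, y⟫ ∧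
    ‖x + t • y‖ ^ p - ‖x‖ ^ p - t * p * ‖x‖ ^ (p - 2) * ⟪x, y⟫ ≤
      t ^ 2 * (p * (p - 1)) * (2 : ℝ) ^ (p - 3) * max (‖x‖ ^ p) (‖y‖ ^ p) := by
  obtain ⟨ht1, ht2⟩ := ht
  have hp1 : (1:ℝ) < p := by linarith
  have hq : (0:ℝ) < p - 2 := by linarith
  by_cases hy : y = 0
  · subst hy
    have h0 : ‖(0 : EuclideanSpace ℝ (Fin N))‖ ^ p = 0 := by
      rw [norm_zero, Real.zero_rpow (by linarith : p ≠ 0)]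
    constructor
    · simp
    · simp only [smul_zero, add_zero, inner_zero_right, mul_zero, sub_zero, sub_self, h0]
      have hmax : (0:ℝ) ≤ max (‖x‖ ^ p) 0 := le_max_right _ _
      have h23 : (0:ℝ) ≤ (2:ℝ) ^ (p - 3) := Real.rpow_nonneg (by norm_num) _
      have h1 : (0:ℝ) ≤ p - 1 := by linarith
      exact mul_nonneg (mul_nonneg (mul_nonneg (sq_nonneg t)
        (mul_nonneg (by linarith) h1)) h23) hmax
  -- main case
  set M : ℝ := max ‖x‖ ‖y‖ with hMdef
  have hMpos : 0 < M := lt_of_lt_of_le (norm_pos_iff.mpr hy) (le_max_right _ _)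
  have hxM : ‖x‖ ≤ M := le_max_left _ _
  have hyM : ‖y‖ ≤ M := le_max_right _ _
  set f' : ℝ → ℝ := fun s => p * ‖x + s • y‖ ^ (p - 2) * ⟪x + s • y, y⟫ with hf'def
  have hderiv : ∀ s : ℝ, HasDerivAt (fun s : ℝ => ‖x + s • y‖ ^ p) (f' s) s := by
    intro s
    have h1 : HasDerivAt (fun s : ℝ => x + s • y) y s := by
      simpa using ((hasDerivAt_id s).smul_const y).const_add x
    have h2 := (hasFDerivAt_norm_rpow (x + s • y) hp1).comp_hasDerivAt s h1
    simpa only [hf'def, Function.comp_def, ContinuousLinearMap.smul_apply, innerSL_apply_apply,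
      smul_eq_mul, mul_assoc] using h2
  have hc1 : Continuous fun s : ℝ => x + s • y := by fun_prop
  have hcont : Continuous f' := by
    apply Continuous.mul
    · exact continuous_const.mul (hc1.norm.rpow_const fun s => Or.inr hq.le)
    · exact hc1.inner continuous_const
  have hint : IntervalIntegrable f' MeasureTheory.volume 0 t :=
    hcont.intervalIntegrable 0 t
  have hintc : IntervalIntegrable (fun _ : ℝ => f' 0) MeasureTheory.volume 0 t :=
    intervalIntegrable_const
  have hftc : ∫ s in (0:ℝ)..t, f' s = ‖x + t • y‖ ^ p - ‖x + (0:ℝ) • y‖ ^ p :=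
    intervalIntegral.integral_eq_sub_of_hasDerivAt (fun s _ => hderiv s) hint
  have hf'0 : f' 0 = p * ‖x‖ ^ (p - 2) * ⟪x, y⟫ := by
    simp only [hf'def, zero_smul, add_zero]
  have hQ : ‖x + t • y‖ ^ p - ‖x‖ ^ p - t * p * ‖x‖ ^ (p - 2) * ⟪x, y⟫
      = ∫ s in (0:ℝ)..t, (f' s - f' 0) := by
    rw [intervalIntegral.integral_sub hint hintc, hftc, intervalIntegral.integral_const,
      hf'0]
    simp only [zero_smul, add_zero, sub_zero, smul_eq_mul]
    ring
  have hsign : ∀ s : ℝ, 0 ≤ s * (f' s - f' 0) := by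
    intro s
    have hsub : (x + s • y) - x = s • y := add_sub_cancel_left x (s • y)
    have e : s * (f' s - f' 0) = p * (‖x + s • y‖ ^ (p - 2) * ⟪x + s • y, (x + s • y) - x⟫
        - ‖x‖ ^ (p - 2) * ⟪x, (x + s • y) - x⟫) := by
      rw [hsub, real_inner_smul_right, real_inner_smul_right, hf'0]
      simp only [hf'def]
      ring
    rw [e]
    exact mul_nonneg (by linarith) (aux_mono hq.le (x + s • y) x)
  set K : ℝ := p * (p - 1) * (2 * M) ^ (p - 2) * (‖y‖ * ‖y‖) with hKdef
  have hKnonneg : 0 ≤ K := by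
    have h2m : (0:ℝ) ≤ (2 * M) ^ (p - 2) := Real.rpow_nonneg (by positivity) _
    have h1 : (0:ℝ) ≤ p - 1 := by linarith
    rw [hKdef]
    have hy2 : (0:ℝ) ≤ ‖y‖ * ‖y‖ := mul_nonneg (norm_nonneg y) (norm_nonneg y)
    apply mul_nonneg (mul_nonneg (mul_nonneg (by linarith) h1) h2m) hy2
  have hlip : ∀ s : ℝ, |s| ≤ 1 → |f' s - f' 0| ≤ K * |s| := by
    intro s hs
    have e : f' s - f' 0 = p * (‖x + s • y‖ ^ (p - 2) * ⟪x + s • y, y⟫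
        - ‖x‖ ^ (p - 2) * ⟪x, y⟫) := by
      rw [hf'0]; simp only [hf'def]; ring
    rw [e, abs_mul, abs_of_nonneg (by linarith : (0:ℝ) ≤ p)]
    have h1 := aux_lip hq (x + s • y) x y
    have hsub : (x + s • y) - x = s • y := add_sub_cancel_left x (s • y)
    have h3 : ‖s • y‖ = |s| * ‖y‖ := by rw [norm_smul, Real.norm_eq_abs]
    rw [hsub, h3] at h1
    have h4 : max ‖x + s • y‖ ‖x‖ ≤ 2 * M := by
      apply max_le
      · have := norm_add_le x (s • y)
        rw [h3] at this
        nlinarith [norm_nonneg y]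
      · linarith
    have h5 : (max ‖x + s • y‖ ‖x‖) ^ (p - 2) ≤ (2 * M) ^ (p - 2) :=
      Real.rpow_le_rpow (le_trans (norm_nonneg x) (le_max_right _ _)) h4 hq.le
    have h6 : (0:ℝ) ≤ (max ‖x + s • y‖ ‖x‖) ^ (p - 2) :=
      Real.rpow_nonneg (le_trans (norm_nonneg x) (le_max_right _ _)) _
    calc p * |‖x + s • y‖ ^ (p - 2) * ⟪x + s • y, y⟫ - ‖x‖ ^ (p - 2) * ⟪x, y⟫|
        ≤ p * ((p - 2 + 1) * (max ‖x + s • y‖ ‖x‖) ^ (p - 2) * (|s| * ‖y‖ * ‖y‖)) :=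
          mul_le_mul_of_nonneg_left h1 (by linarith)
      _ ≤ p * ((p - 2 + 1) * (2 * M) ^ (p - 2) * (|s| * ‖y‖ * ‖y‖)) := by
          have h7 : (0:ℝ) ≤ |s| * ‖y‖ * ‖y‖ := by positivity
          have h8 : (0:ℝ) ≤ p - 2 + 1 := by linarith
          have h9 : (p - 2 + 1) * (max ‖x + s • y‖ ‖x‖) ^ (p - 2)
              ≤ (p - 2 + 1) * (2 * M) ^ (p - 2) := mul_le_mul_of_nonneg_left h5 h8
          exact mul_le_mul_of_nonneg_left (mul_le_mul_of_nonneg_right h9 h7) (by linarith)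
      _ = K * |s| := by rw [hKdef]; ring
  -- bound between -1 and 1 on uIcc 0 t
  have habs : ∀ s : ℝ, s ∈ Set.uIcc 0 t → |s| ≤ 1 := by
    intro s hs
    rw [Set.uIcc_eq_union] at hs
    rcases hs with hs | hs
    · rw [abs_le]; exact ⟨by linarith [hs.1], by linarith [hs.2]⟩
    · rw [abs_le]; exact ⟨by linarith [hs.1], by linarith [hs.2]⟩
  have hintg : IntervalIntegrable (fun s => f' s - f' 0) MeasureTheory.volume 0 t :=
    hint.sub hintc
  have hintK : ∀ a b : ℝ, IntervalIntegrable (fun s => K * s) MeasureTheory.volume a b :=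
    fun a b => (continuous_const.mul continuous_id).intervalIntegrable a b
  have hidK : ∀ a b : ℝ, (∫ s in a..b, K * s) = K * (b ^ 2 - a ^ 2) / 2 := by
    intro a b
    rw [intervalIntegral.integral_const_mul, integral_id]
    ring
  constructor
  · -- lower bound
    rw [hQ]
    rcases le_or_gt 0 t with h | h
    · apply intervalIntegral.integral_nonneg h
      intro s hs
      rcases eq_or_lt_of_le hs.1 with h0 | h0
      · rw [← h0]; simp
      · by_contra hneg
        push_neg at hneg
        nlinarith [hsign s]
    · rw [intervalIntegral.integral_symm]
      rw [neg_nonneg]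
      have hmono := intervalIntegral.integral_mono_on h.le hintg.symm
        (intervalIntegrable_const (c := (0:ℝ))) (fun s hs => by
          rcases eq_or_lt_of_le hs.2 with h0 | h0
          · rw [h0]; simp
          · by_contra hneg
            push_neg at hneg
            nlinarith [hsign s])
      simpa using hmono
  · -- upper bound
    have hfin : K * t ^ 2 / 2 ≤
        t ^ 2 * (p * (p - 1)) * (2:ℝ) ^ (p - 3) * max (‖x‖ ^ p) (‖y‖ ^ p) := by
      have hmax : max (‖x‖ ^ p) (‖y‖ ^ p) = M ^ p := by
        rcases le_total ‖x‖ ‖y‖ with h | h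
        · rw [hMdef, max_eq_right h,
            max_eq_right (Real.rpow_le_rpow (norm_nonneg x) h (by linarith))]
        · rw [hMdef, max_eq_left h,
            max_eq_left (Real.rpow_le_rpow (norm_nonneg y) h (by linarith))]
      have h2M : (2 * M) ^ (p - 2) = (2:ℝ) ^ (p - 2) * M ^ (p - 2) :=
        Real.mul_rpow (by norm_num) hMpos.le
      have h2 : (2:ℝ) ^ (p - 2) = (2:ℝ) ^ (p - 3) * 2 := by
        rw [← Real.rpow_add_one (by norm_num : (2:ℝ) ≠ 0) (p - 3)]
        ring_nf
      have hMq : M ^ (p - 2) * (M * M) = M ^ p := by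
        have e1 : M ^ (p - 2) * M = M ^ (p - 1) := by
          rw [← Real.rpow_add_one hMpos.ne' (p - 2)]; ring_nf
        have e2 : M ^ (p - 1) * M = M ^ p := by
          rw [← Real.rpow_add_one hMpos.ne' (p - 1)]; ring_nf
        calc M ^ (p - 2) * (M * M) = M ^ (p - 2) * M * M := by ring
          _ = M ^ p := by rw [e1, e2]
      have hyy : M ^ (p - 2) * (‖y‖ * ‖y‖) ≤ M ^ p := by
        rw [← hMq]
        have : ‖y‖ * ‖y‖ ≤ M * M :=
          mul_le_mul hyM hyM (norm_nonneg y) hMpos.le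
        exact mul_le_mul_of_nonneg_left this (Real.rpow_nonneg hMpos.le _)
      rw [hmax, hKdef, h2M, h2]
      have hcoef : (0:ℝ) ≤ t ^ 2 * (p * (p - 1)) * (2:ℝ) ^ (p - 3) := by
        have h23 : (0:ℝ) ≤ (2:ℝ) ^ (p - 3) := Real.rpow_nonneg (by norm_num) _
        have h1 : (0:ℝ) ≤ p - 1 := by linarith
        exact mul_nonneg (mul_nonneg (sq_nonneg t) (mul_nonneg (by linarith) h1)) h23
      calc p * (p - 1) * ((2:ℝ) ^ (p - 3) * 2 * M ^ (p - 2)) * (‖y‖ * ‖y‖) * t ^ 2 / 2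
          = t ^ 2 * (p * (p - 1)) * (2:ℝ) ^ (p - 3) * (M ^ (p - 2) * (‖y‖ * ‖y‖)) := by
            ring
        _ ≤ t ^ 2 * (p * (p - 1)) * (2:ℝ) ^ (p - 3) * M ^ p :=
            mul_le_mul_of_nonneg_left hyy hcoef
    rw [hQ]
    rcases le_or_gt 0 t with h | h
    · have hmono : (∫ s in (0:ℝ)..t, (f' s - f' 0)) ≤ ∫ s in (0:ℝ)..t, K * s := by
        apply intervalIntegral.integral_mono_on h hintg (hintK 0 t)
        intro s hs
        have hs1 : |s| ≤ 1 := by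
          rw [abs_le]; exact ⟨by linarith [hs.1], by linarith [hs.2]⟩
        have := hlip s hs1
        rw [abs_of_nonneg hs.1] at this
        calc f' s - f' 0 ≤ |f' s - f' 0| := le_abs_self _
          _ ≤ K * s := this
      calc (∫ s in (0:ℝ)..t, (f' s - f' 0)) ≤ ∫ s in (0:ℝ)..t, K * s := hmono
        _ = K * t ^ 2 / 2 := by rw [hidK]; ring
        _ ≤ _ := hfin
    · rw [intervalIntegral.integral_symm]
      have hmono : (∫ s in t..(0:ℝ), K * s) ≤ ∫ s in t..(0:ℝ), (f' s - f' 0) := by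
        apply intervalIntegral.integral_mono_on h.le (hintK t 0) (hintg.symm)
        intro s hs
        have hs1 : |s| ≤ 1 := by
          rw [abs_le]; exact ⟨by linarith [hs.1], by linarith [hs.2]⟩
        have hl := hlip s hs1
        rw [abs_of_nonpos hs.2] at hl
        have hna := neg_abs_le (f' s - f' 0)
        linarith
      have : -(∫ s in t..(0:ℝ), (f' s - f' 0)) ≤ -(∫ s in t..(0:ℝ), K * s) :=
        neg_le_neg hmono
      calc -(∫ s in t..(0:ℝ), (f' s - f' 0)) ≤ -(∫ s in t..(0:ℝ), K * s) := this
        _ = K * t ^ 2 / 2 := by rw [hidK]; ring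
        _ ≤ _ := hfin
end

section
/- Let N ≥ 1 be an integer and p ≥ 2 a real number. For all x, y ∈ ℝ^N, |x − y|^p ≤ 2^{p−1}·(|x|^{p−2}x − |y|^{p−2}y)·(x − y), where |·| denotes the Euclidean norm, the dot denotes the Euclidean inner product, and |x|^{p−2}x is interpreted as 0 when x = 0. -/
open RealInnerProductSpace

theorem stmt_8 (N : ℕ) (hN : 1 ≤ N) (p : ℝ) (hp : 2 ≤ p)
    (x y : EuclideanSpace ℝ (Fin N)) :
    ‖x - y‖ ^ p ≤ (2 : ℝ) ^ (p - 1) * ⟪(‖x‖ ^ (p - 2)) • x - (‖y‖ ^ (p - 2)) • y, x - y⟫ := by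
  set q := p - 2 with hq
  have hq0 : 0 ≤ q := by simp [hq]; linarith
  set a := ‖x‖ with ha
  set b := ‖y‖ with hb
  set c := ‖x - y‖ with hc
  have ha0 : 0 ≤ a := norm_nonneg _
  have hb0 : 0 ≤ b := norm_nonneg _
  have hc0 : 0 ≤ c := norm_nonneg _
  have haq : 0 ≤ a ^ q := Real.rpow_nonneg ha0 _
  have hbq : 0 ≤ b ^ q := Real.rpow_nonneg hb0 _
  have hK : ⟪(a ^ q) • x - (b ^ q) • y, x - y⟫ =
      a ^ q * a ^ 2 - (a ^ q + b ^ q) * ⟪x, y⟫ + b ^ q * b ^ 2 := by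
    simp only [inner_sub_left, inner_sub_right, real_inner_smul_left,
      real_inner_self_eq_norm_sq, real_inner_comm y x]
    rw [← ha, ← hb]; ring
  have hcsq : c ^ 2 = a ^ 2 + b ^ 2 - 2 * ⟪x, y⟫ := by
    rw [hc, ha, hb, @norm_sub_sq_real]; ring
  have claim1 : (1/2) * (a ^ q + b ^ q) * c ^ 2 ≤ ⟪(a ^ q) • x - (b ^ q) • y, x - y⟫ := by
    rw [hK, hcsq]
    have hmono : 0 ≤ (a ^ q - b ^ q) * (a ^ 2 - b ^ 2) := by
      rcases le_total a b with h | h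
      · have h1 : a ^ q ≤ b ^ q := Real.rpow_le_rpow ha0 h hq0
        have h2 : a ^ 2 ≤ b ^ 2 := pow_le_pow_left₀ ha0 h 2
        nlinarith
      · have h1 : b ^ q ≤ a ^ q := Real.rpow_le_rpow hb0 h hq0
        have h2 : b ^ 2 ≤ a ^ 2 := pow_le_pow_left₀ hb0 h 2
        nlinarith
    nlinarith
  rcases eq_or_lt_of_le hc0 with hc0' | hcpos
  · have hxy : x - y = 0 := by
      have : ‖x - y‖ = 0 := hc0'.symm
      simpa using this
    rw [hxy]
    simp only [inner_zero_right, mul_zero]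
    rw [← hc0']
    rw [Real.zero_rpow (by linarith : p ≠ 0)]
  · -- c > 0 case
    have hcab : c ≤ a + b := by rw [hc, ha, hb]; exact norm_sub_le x y
    have hcq : c ^ q ≤ 2 ^ q * (a ^ q + b ^ q) := by
      have h1 : c ^ q ≤ (a + b) ^ q := Real.rpow_le_rpow hc0 hcab hq0
      have h2 : (a + b) ^ q ≤ (2 * max a b) ^ q := by
        apply Real.rpow_le_rpow (by linarith) _ hq0
        rcases le_total a b with h | h
        · rw [max_eq_right h]; linarith
        · rw [max_eq_left h]; linarith
      have h3 : (2 * max a b) ^ q = 2 ^ q * (max a b) ^ q :=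
        Real.mul_rpow (by norm_num) (le_max_of_le_left ha0)
      have h4 : (max a b) ^ q ≤ a ^ q + b ^ q := by
        rcases le_total a b with h | h
        · rw [max_eq_right h]; linarith
        · rw [max_eq_left h]; linarith
      have h2q : (0:ℝ) ≤ (2:ℝ) ^ q := Real.rpow_nonneg (by norm_num) _
      calc c ^ q ≤ (a + b) ^ q := h1
        _ ≤ (2 * max a b) ^ q := h2
        _ = 2 ^ q * (max a b) ^ q := h3
        _ ≤ 2 ^ q * (a ^ q + b ^ q) := by nlinarith
    have hcp : c ^ p = c ^ q * c ^ 2 := by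
      rw [hq]
      have : c ^ (p - 2) * c ^ 2 = c ^ (p - 2) * c ^ (2:ℝ) := by
        rw [show ((2:ℝ)) = ((2:ℕ):ℝ) by norm_num, Real.rpow_natCast]
      rw [this, ← Real.rpow_add hcpos]; ring_nf
    have hfinal : c ^ p ≤ 2 ^ q * (a ^ q + b ^ q) * c ^ 2 := by
      rw [hcp]
      have : (0:ℝ) < c ^ 2 := by positivity
      nlinarith
    have hconst : (2:ℝ) ^ (p - 1) * (1/2) = 2 ^ q := by
      rw [hq]
      rw [show (1/2 : ℝ) = (2:ℝ) ^ (-1 : ℝ) by norm_num [Real.rpow_neg_one]]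
      rw [← Real.rpow_add (by norm_num)]
      norm_num
      ring_nf
    have h2p1 : (0:ℝ) < (2:ℝ) ^ (p - 1) := Real.rpow_pos_of_pos (by norm_num) _
    calc c ^ p ≤ 2 ^ q * (a ^ q + b ^ q) * c ^ 2 := hfinal
      _ = 2 ^ (p - 1) * ((1/2) * (a ^ q + b ^ q) * c ^ 2) := by rw [← hconst]; ring
      _ ≤ 2 ^ (p - 1) * ⟪(a ^ q) • x - (b ^ q) • y, x - y⟫ := by
          exact mul_le_mul_of_nonneg_left claim1 (le_of_lt h2p1)
end

section
/- (Minty's trick in Lebesgue spaces.) Let Ω ⊂ ℝ^N be a measurable set of finite Lebesgue measure, let q₁, q₂ ∈ (1,2), and let L > 0. Let (ζ_n) be a sequence of nondecreasing L-Lipschitz continuous functions ζ_n : ℝ → ℝ with ζ_n(0) = 0 that converges pointwise on ℝ to a function ζ. Let (v_n) be a sequence in L^{q₂}(Ω) and v ∈ L^{q₂}(Ω) such that for every g ∈ L^{q₂/(q₂−1)}(Ω), ∫_Ω v_n g dx → ∫_Ω v g dx; and suppose the functions ζ_n∘v_n belong to L^{q₁}(Ω) and converge strongly in L^{q₁}(Ω)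 to a function u ∈ L^{q₁}(Ω). Then u = ζ∘v almost everywhere in Ω. -/
/-!
Pass to a subsequence along which `ζₙ ∘ vₙ → u` almost everywhere, and suppose `u ≥ ζ ∘ v + ε`
on a set of positive measure. By Egorov's theorem `ζₙ ∘ vₙ - ζₙ ∘ v → u - ζ ∘ v` uniformly on a
subset `t` of positive measure, so eventually `ζₙ (vₙ x) ≥ ζₙ (v x) + ε / 2` on `t`. Since `ζₙ` is
nondecreasing and `L`-Lipschitz this forces `L vₙ ≥ L v + ε / 2` on `t`, which is incompatible
with `∫_t vₙ → ∫_t v`. Hence `u ≤ ζ ∘ v` a.e.; the reverse inequality is the same argument for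
`s ↦ -ζₙ (-s)` and `-vₙ`.
-/

open MeasureTheory Filter Topology
open scoped ENNReal NNReal

theorem Monotone.mul_add_le_mul_of_lipschitzWith {φ : ℝ → ℝ} {K : ℝ≥0} (hφ : Monotone φ)
    (hlip : LipschitzWith K φ) {a b c : ℝ} (hc : 0 < c) (h : φ a + c ≤ φ b) :
    K * a + c ≤ K * b := by
  have hab : a ≤ b := le_of_not_gt fun hba => by linarith [hφ hba.le]
  have hdist := hlip.dist_le_mul b a
  rw [Real.dist_eq, Real.dist_eq, abs_of_nonneg (sub_nonneg.2 hab),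
    abs_of_nonneg (by linarith [hφ hab])] at hdist
  linarith [mul_sub (K : ℝ) b a]

section

variable {α : Type*} [MeasurableSpace α] {μ : Measure α}

theorem exists_tendstoUniformlyOn_of_ae_tendsto_of_aestronglyMeasurable {β : Type*}
    [MetricSpace β] {f : ℕ → α → β} {g : α → β} {s : Set α}
    (hf : ∀ n, AEStronglyMeasurable (f n) μ) (hg : AEStronglyMeasurable g μ)
    (hs : NullMeasurableSet s μ) (hμs : μ s ≠ ∞)
    (hfg : ∀ᵐ x ∂μ, Tendsto (fun n => f n x) atTop (𝓝 (g x))) {ε : ℝ} (hε : 0 < ε) :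
    ∃ t ⊆ s, MeasurableSet t ∧ μ s ≤ μ t + ENNReal.ofReal ε ∧
      TendstoUniformlyOn f g atTop t := by
  obtain ⟨S, hSs, hSm, hSae⟩ := hs.exists_measurable_subset_ae_eq
  obtain ⟨G, hG, hGm, hfG⟩ :=
    (hfg.and ((ae_all_iff.2 fun n => (hf n).ae_eq_mk).and hg.ae_eq_mk)).exists_measurable_mem
  have hSG : μ (S ∩ G) = μ s := by rw [measure_inter_conull hG, measure_congr hSae]
  obtain ⟨t, hts, htm, hμt, hunif⟩ :=
    tendstoUniformlyOn_of_ae_tendsto (fun n => (hf n).stronglyMeasurable_mk)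
      hg.stronglyMeasurable_mk (hSm.inter hGm) (hSG ▸ hμs)
      (ae_of_all _ fun x hx => by
        obtain ⟨hlim, hfx, hgx⟩ := hfG x hx.2
        simpa only [← hfx, ← hgx] using hlim) hε
  refine ⟨(S ∩ G) \ t, Set.sdiff_subset.trans (Set.inter_subset_left.trans hSs),
    (hSm.inter hGm).diff htm, ?_, ?_⟩
  · calc μ s = μ ((S ∩ G) \ t ∪ t) := by rw [Set.sdiff_union_of_subset hts, hSG]
      _ ≤ μ ((S ∩ G) \ t) + ENNReal.ofReal ε := (measure_union_le _ _).trans (by gcongr)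
  · refine hunif.congr (Eventually.of_forall fun n x hx => ?_)
      |>.congr_right fun x hx => ?_
    · exact ((hfG x hx.1.2).2.1 n).symm
    · exact ((hfG x hx.1.2).2.2).symm

theorem measure_eq_zero_of_tendsto_setIntegral_of_add_le {t : Set α} (ht : MeasurableSet t)
    (hμt : μ t ≠ ∞) {w : ℕ → α → ℝ} {w₀ : α → ℝ} (hw : ∀ n, IntegrableOn (w n) t μ)
    (hw₀ : IntegrableOn w₀ t μ)
    (hlim : Tendsto (fun n => ∫ x in t, w n x ∂μ) atTop (𝓝 (∫ x in t, w₀ x ∂μ)))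
    {δ : ℝ} (hδ : 0 < δ) (hgap : ∀ᶠ n in atTop, ∀ x ∈ t, w₀ x + δ ≤ w n x) : μ t = 0 := by
  have hδint : IntegrableOn (fun _ => δ) t μ := integrableOn_const hμt
  have hle : ∀ᶠ n in atTop, ∫ x in t, w₀ x ∂μ + δ * μ.real t ≤ ∫ x in t, w n x ∂μ :=
    hgap.mono fun n hn => calc
      ∫ x in t, w₀ x ∂μ + δ * μ.real t = ∫ x in t, (w₀ x + δ) ∂μ := by
        rw [integral_add hw₀ hδint, setIntegral_const, smul_eq_mul, mul_comm]
      _ ≤ ∫ x in t, w n x ∂μ := setIntegral_mono_on (hw₀.add hδint) (hw n) ht hn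
  have hneg : δ * μ.real t ≤ 0 := by linarith [ge_of_tendsto hlim hle]
  exact (measureReal_eq_zero_iff hμt).1
    (le_antisymm (nonpos_of_mul_nonpos_right hneg hδ) measureReal_nonneg)

theorem tendsto_setIntegral_of_tendsto_integral_mul [IsFiniteMeasure μ] {p : ℝ≥0∞}
    {vn : ℕ → α → ℝ} {v : α → ℝ}
    (hweak : ∀ g : α → ℝ, MemLp g p μ →
      Tendsto (fun n => ∫ x, vn n x * g x ∂μ) atTop (𝓝 (∫ x, v x * g x ∂μ)))
    {t : Set α} (ht : MeasurableSet t) :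
    Tendsto (fun n => ∫ x in t, vn n x ∂μ) atTop (𝓝 (∫ x in t, v x ∂μ)) := by
  simpa only [← Set.indicator_mul_right, mul_one, integral_indicator ht] using
    hweak _ (memLp_indicator_const p ht (1 : ℝ) (Or.inr (measure_ne_top μ t)))

variable [IsFiniteMeasure μ] {K : ℝ≥0} {ζn : ℕ → ℝ → ℝ} {ζ : ℝ → ℝ} {vn : ℕ → α → ℝ}
  {v u : α → ℝ}

theorem ae_le_comp_of_tendsto_setIntegral (hmono : ∀ n, Monotone (ζn n))
    (hlip : ∀ n, LipschitzWith K (ζn n)) (hζ : ∀ s, Tendsto (fun n => ζn n s) atTop (𝓝 (ζ s)))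
    (hvn : ∀ n, Integrable (vn n) μ) (hv : Integrable v μ)
    (hweak : ∀ t, MeasurableSet t →
      Tendsto (fun n => ∫ x in t, vn n x ∂μ) atTop (𝓝 (∫ x in t, v x ∂μ)))
    (hconv : ∀ᵐ x ∂μ, Tendsto (fun n => ζn n (vn n x)) atTop (𝓝 (u x))) :
    ∀ᵐ x ∂μ, u x ≤ ζ (v x) := by
  have hcomp : ∀ n {w : α → ℝ}, Integrable w μ → AEStronglyMeasurable (fun x => ζn n (w x)) μ :=
    fun n w hw => (hlip n).continuous.comp_aestronglyMeasurable hw.1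
  have hζv : AEStronglyMeasurable (fun x => ζ (v x)) μ :=
    aestronglyMeasurable_of_tendsto_ae atTop (fun n => hcomp n hv) (ae_of_all _ fun x => hζ (v x))
  have hu : AEStronglyMeasurable u μ :=
    aestronglyMeasurable_of_tendsto_ae atTop (fun n => hcomp n (hvn n)) hconv
  have hnull : ∀ ε > 0, μ {x | ε ≤ u x - ζ (v x)} = 0 := by
    intro ε hε
    have hgap : ∀ t ⊆ {x | ε ≤ u x - ζ (v x)}, MeasurableSet t →
        TendstoUniformlyOn (fun n x => ζn n (vn n x) - ζn n (v x)) (fun x => u x - ζ (v x))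
          atTop t → μ t = 0 := by
      intro t hts htm hunif
      refine measure_eq_zero_of_tendsto_setIntegral_of_add_le (w := fun n x => K * vn n x)
        (w₀ := fun x => K * v x) htm (measure_ne_top _ _)
        (fun n => ((hvn n).const_mul _).integrableOn) (hv.const_mul _).integrableOn ?_
        (half_pos hε) ?_
      · simpa only [integral_const_mul] using (hweak t htm).const_mul (K : ℝ)
      · filter_upwards [Metric.tendstoUniformlyOn_iff.1 hunif _ (half_pos hε)] with n hn x hx
        refine (hmono n).mul_add_le_mul_of_lipschitzWith (hlip n) (half_pos hε) ?_
        have hdist := hn x hx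
        have hgx : ε ≤ u x - ζ (v x) := hts hx
        rw [Real.dist_eq, abs_lt] at hdist
        linarith [hdist.2]
    refine nonpos_iff_eq_zero.1 (ENNReal.le_of_forall_pos_le_add fun σ hσ _ => ?_)
    obtain ⟨t, hts, htm, hμ, hunif⟩ :=
      exists_tendstoUniformlyOn_of_ae_tendsto_of_aestronglyMeasurable
        (fun n => (hcomp n (hvn n)).sub (hcomp n hv)) (hu.sub hζv)
        (nullMeasurableSet_le aemeasurable_const (hu.sub hζv).aemeasurable) (measure_ne_top _ _)
        (hconv.mono fun x hx => hx.sub (hζ (v x))) (NNReal.coe_pos.2 hσ)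
    rwa [hgap t hts htm hunif, ENNReal.ofReal_coe_nnreal] at hμ
  have hlt : ∀ᵐ x ∂μ, ∀ m : ℕ, u x - ζ (v x) < 1 / (m + 1) :=
    ae_all_iff.2 fun m => by
      simpa only [ae_iff, not_lt] using hnull _ Nat.one_div_pos_of_nat
  filter_upwards [hlt] with x hx
  refine sub_nonpos.1 (le_of_forall_pos_lt_add fun ε hε => ?_)
  obtain ⟨m, hm⟩ := exists_nat_one_div_lt hε
  linarith [hx m]

theorem ae_eq_comp_of_tendsto_setIntegral (hmono : ∀ n, Monotone (ζn n))
    (hlip : ∀ n, LipschitzWith K (ζn n)) (hζ : ∀ s, Tendsto (fun n => ζn n s) atTop (𝓝 (ζ s)))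
    (hvn : ∀ n, Integrable (vn n) μ) (hv : Integrable v μ)
    (hweak : ∀ t, MeasurableSet t →
      Tendsto (fun n => ∫ x in t, vn n x ∂μ) atTop (𝓝 (∫ x in t, v x ∂μ)))
    (hconv : ∀ᵐ x ∂μ, Tendsto (fun n => ζn n (vn n x)) atTop (𝓝 (u x))) :
    ∀ᵐ x ∂μ, u x = ζ (v x) := by
  have hle := ae_le_comp_of_tendsto_setIntegral hmono hlip hζ hvn hv hweak hconv
  have hge := ae_le_comp_of_tendsto_setIntegral (μ := μ) (K := K)
    (ζn := fun n s => -ζn n (-s)) (ζ := fun s => -ζ (-s))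
    (vn := fun n x => -vn n x) (v := fun x => -v x) (u := fun x => -u x)
    (fun n a b hab => neg_le_neg (hmono n (neg_le_neg hab)))
    (fun n => .of_dist_le_mul fun a b => by
      simpa only [dist_neg_neg] using (hlip n).dist_le_mul (-a) (-b))
    (fun s => (hζ (-s)).neg) (fun n => (hvn n).neg) hv.neg
    (fun t ht => by simpa only [integral_neg] using (hweak t ht).neg)
    (hconv.mono fun x hx => by simpa only [neg_neg] using hx.neg)
  filter_upwards [hle, hge] with x h₁ h₂
  rw [neg_neg, neg_le_neg_iff] at h₂
  exact le_antisymm h₁ h₂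

end

theorem stmt_12_general (N : ℕ) (Ω : Set (EuclideanSpace ℝ (Fin N)))
    (hΩfin : volume Ω < ⊤)
    (q₁ q₂ : ℝ) (hq₁ : q₁ ∈ Set.Ioo (1 : ℝ) 2) (hq₂ : q₂ ∈ Set.Ioo (1 : ℝ) 2)
    (L : ℝ)
    (ζn : ℕ → ℝ → ℝ) (ζ : ℝ → ℝ)
    (hζn_mono : ∀ n, Monotone (ζn n))
    (hζn_lip : ∀ n, LipschitzWith (Real.toNNReal L) (ζn n))
    (hζn_ptwise : ∀ s : ℝ, Tendsto (fun n => ζn n s) atTop (nhds (ζ s)))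
    (vn : ℕ → EuclideanSpace ℝ (Fin N) → ℝ) (v : EuclideanSpace ℝ (Fin N) → ℝ)
    (hvn : ∀ n, MemLp (vn n) (ENNReal.ofReal q₂) (volume.restrict Ω))
    (hv : MemLp v (ENNReal.ofReal q₂) (volume.restrict Ω))
    (hweak : ∀ g : EuclideanSpace ℝ (Fin N) → ℝ,
      MemLp g (ENNReal.ofReal (q₂ / (q₂ - 1))) (volume.restrict Ω) →
      Tendsto (fun n => ∫ x, vn n x * g x ∂(volume.restrict Ω)) atTop
        (nhds (∫ x, v x * g x ∂(volume.restrict Ω))))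
    (u : EuclideanSpace ℝ (Fin N) → ℝ)
    (hu : MemLp u (ENNReal.ofReal q₁) (volume.restrict Ω))
    (hζnvn : ∀ n, MemLp (fun x => ζn n (vn n x)) (ENNReal.ofReal q₁) (volume.restrict Ω))
    (hstrong : Tendsto
      (fun n => eLpNorm (fun x => ζn n (vn n x) - u x) (ENNReal.ofReal q₁) (volume.restrict Ω))
      atTop (nhds 0)) :
    ∀ᵐ x ∂(volume.restrict Ω), u x = ζ (v x) := by
  have : IsFiniteMeasure (volume.restrict Ω) := ⟨by rwa [Measure.restrict_apply_univ]⟩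
  have hq₂_one : 1 ≤ ENNReal.ofReal q₂ := ENNReal.one_le_ofReal.2 hq₂.1.le
  obtain ⟨ns, hns, hae⟩ :=
    (tendstoInMeasure_of_tendsto_eLpNorm (ENNReal.ofReal_pos.2 (zero_lt_one.trans hq₁.1)).ne'
      (fun n => (hζnvn n).1) hu.1 hstrong).exists_seq_tendsto_ae
  exact ae_eq_comp_of_tendsto_setIntegral (fun n => hζn_mono (ns n)) (fun n => hζn_lip (ns n))
    (fun s => (hζn_ptwise s).comp hns.tendsto_atTop) (fun n => (hvn (ns n)).integrable hq₂_one)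
    (hv.integrable hq₂_one)
    (fun t ht => (tendsto_setIntegral_of_tendsto_integral_mul hweak ht).comp hns.tendsto_atTop) hae

/-- Minty's trick in Lebesgue spaces. -/
theorem stmt_12 (N : ℕ) (Ω : Set (EuclideanSpace ℝ (Fin N)))
    (hΩ : MeasurableSet Ω) (hΩfin : volume Ω < ⊤)
    (q₁ q₂ : ℝ) (hq₁ : q₁ ∈ Set.Ioo (1 : ℝ) 2) (hq₂ : q₂ ∈ Set.Ioo (1 : ℝ) 2)
    (L : ℝ) (hL : 0 < L)
    (ζn : ℕ → ℝ → ℝ) (ζ : ℝ → ℝ)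
    (hζn_mono : ∀ n, Monotone (ζn n))
    (hζn_lip : ∀ n, LipschitzWith (Real.toNNReal L) (ζn n))
    (hζn_zero : ∀ n, ζn n 0 = 0)
    (hζn_ptwise : ∀ s : ℝ, Tendsto (fun n => ζn n s) atTop (nhds (ζ s)))
    (vn : ℕ → EuclideanSpace ℝ (Fin N) → ℝ) (v : EuclideanSpace ℝ (Fin N) → ℝ)
    (hvn : ∀ n, MemLp (vn n) (ENNReal.ofReal q₂) (volume.restrict Ω))
    (hv : MemLp v (ENNReal.ofReal q₂) (volume.restrict Ω))
    (hweak : ∀ g : EuclideanSpace ℝ (Fin N) → ℝ,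
      MemLp g (ENNReal.ofReal (q₂ / (q₂ - 1))) (volume.restrict Ω) →
      Tendsto (fun n => ∫ x, vn n x * g x ∂(volume.restrict Ω)) atTop
        (nhds (∫ x, v x * g x ∂(volume.restrict Ω))))
    (u : EuclideanSpace ℝ (Fin N) → ℝ)
    (hu : MemLp u (ENNReal.ofReal q₁) (volume.restrict Ω))
    (hζnvn : ∀ n, MemLp (fun x => ζn n (vn n x)) (ENNReal.ofReal q₁) (volume.restrict Ω))
    (hstrong : Tendsto
      (fun n => eLpNorm (fun x => ζn n (vn n x) - u x) (ENNReal.ofReal q₁) (volume.restrict Ω))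
      atTop (nhds 0)) :
    ∀ᵐ x ∂(volume.restrict Ω), u x = ζ (v x) :=
  stmt_12_general N Ω hΩfin q₁ q₂ hq₁ hq₂ L ζn ζ hζn_mono hζn_lip hζn_ptwise vn v hvn hv hweak u hu
    hζnvn hstrong
end
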